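/- The vector (4−√15, 1, 4−√15, 1, 4−√15, 1, 4−√15, 1, 4−√15, 1, 4−√15, 1) is an eigenvector of the 12×12 monotile inflation matrix M_mono with eigenvalue 4 + √15. -/

import Mathlib

/-!
The alternating vectors `(x, y, x, y, …)` span a plane invariant under `Mmono`, on which it
acts by `(x, y) ↦ (y, 8y - x)`: in every row the even-indexed entries sum to `0` and the
odd-indexed ones to `1` (even rows), resp. to `-1` and `8` (odd rows). The restricted map has
characteristic polynomial `t² - 8t + 1` with root `λ = 4 + √15`, and `(λ⁻¹, 1) = (4 - √15, 1)`
is an eigenvector for it since `λ (4 - √15) = 1` and `8 - (4 - √15) = λ`.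
-/

/-- The 12×12 monotile inflation matrix M_mono. -/
def Mmono : Matrix (Fin 12) (Fin 12) ℝ :=
  Matrix.of
  ![![1, 0, 2, 0, 0, 0, -2, 1, -1, 0, 0, 0],
   ![0, 1, 5, 0, 3, 1, 0, 2, -4, 2, -5, 2],
   ![0, 0, 1, 0, 2, 0, 0, 0, -2, 1, -1, 0],
   ![-5, 2, 0, 1, 5, 0, 3, 1, 0, 2, -4, 2],
   ![-1, 0, 0, 0, 1, 0, 2, 0, 0, 0, -2, 1],
   ![-4, 2, -5, 2, 0, 1, 5, 0, 3, 1, 0, 2],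
   ![-2, 1, -1, 0, 0, 0, 1, 0, 2, 0, 0, 0],
   ![0, 2, -4, 2, -5, 2, 0, 1, 5, 0, 3, 1],
   ![0, 0, -2, 1, -1, 0, 0, 0, 1, 0, 2, 0],
   ![3, 1, 0, 2, -4, 2, -5, 2, 0, 1, 5, 0],
   ![2, 0, 0, 0, -2, 1, -1, 0, 0, 0, 1, 0],
   ![5, 0, 3, 1, 0, 2, -4, 2, -5, 2, 0, 1]]

def alternating (n : ℕ) (x y : ℝ) : Fin n → ℝ := fun i => if (i : ℕ) % 2 = 0 then x else y

theorem alternating_ne_zero {n : ℕ} (hn : 2 ≤ n) (x : ℝ) {y : ℝ} (hy : y ≠ 0) :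
    alternating n x y ≠ 0 := fun h => hy (by simpa [alternating] using congrFun h ⟨1, hn⟩)

theorem smul_alternating (n : ℕ) (c x y : ℝ) :
    c • alternating n x y = alternating n (c * x) (c * y) := by
  ext i
  simp only [alternating, Pi.smul_apply, smul_eq_mul]
  split_ifs <;> rfl

theorem Mmono_mulVec_alternating (x y : ℝ) :
    Mmono.mulVec (alternating 12 x y) = alternating 12 y (8 * y - x) := by
  ext i
  fin_cases i <;>
    simp [Mmono, alternating, Matrix.mulVec, dotProduct, Fin.sum_univ_succ] <;> ring

theorem four_add_sqrt_fifteen_mul_four_sub_sqrt_fifteen : (4 + √15) * (4 - √15) = 1 := by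
  have h15 : √15 ^ 2 = 15 := Real.sq_sqrt (by norm_num)
  linear_combination -h15

/-- The vector alternating (4−√15, 1, 4−√15, 1, …) is an eigenvector of M_mono
with eigenvalue 4+√15. -/
theorem eigenvector_Mmono :
    (fun i : Fin 12 => if (i : ℕ) % 2 = 0 then 4 - Real.sqrt 15 else 1) ≠ 0 ∧
    Mmono.mulVec (fun i : Fin 12 => if (i : ℕ) % 2 = 0 then 4 - Real.sqrt 15 else 1) =
      (4 + Real.sqrt 15) •
        (fun i : Fin 12 => if (i : ℕ) % 2 = 0 then 4 - Real.sqrt 15 else 1) := by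
  change alternating 12 (4 - √15) 1 ≠ 0 ∧
    Mmono.mulVec (alternating 12 (4 - √15) 1) = (4 + √15) • alternating 12 (4 - √15) 1
  refine ⟨alternating_ne_zero (by norm_num) _ one_ne_zero, ?_⟩
  rw [Mmono_mulVec_alternating, smul_alternating, four_add_sqrt_fifteen_mul_four_sub_sqrt_fifteen]
  congr 1
  ring
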